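/- Let α = (α_1, …, α_K) be a nonincreasing OWA vector of nonnegative reals and assume |A| = m ≥ K ≥ 1. Let W_0 = ∅ and, for t = 1, …, K, let W_t = W_{t−1} ∪ {a_t}, where a_t is any element of A ∖ W_{t−1} maximizing u^α(W_{t−1} ∪ {a}) over a ∈ A ∖ W_{t−1}. Then u^α(W_K) ≥ (1 − (1 − 1/K)^K) · max_{S ⊆ A, |S| = K} u^α(S) ≥ (1 − 1/e) · max_{S ⊆ A, |S| = K} u^α(S). -/

import Mathlib

open Finset

/-- The OWA-aggregated total utility of a set `W` of items: for each agent `i` in `N`,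
the intrinsic utilities of the items of `W` are sorted in nonincreasing order
`x_0 ≥ x_1 ≥ …` and the agent contributes `∑_{j < K} α j * x_j`
(positions beyond `|W|` contribute `0`).  The OWA vector is `0`-indexed:
`α j` is entry `α_{j+1}` of the paper. -/
noncomputable def owaUtil {I A : Type*} [DecidableEq A]
    (N : Finset I) (u : I → A → ℝ) (K : ℕ) (α : ℕ → ℝ) (W : Finset A) : ℝ :=
  ∑ i ∈ N, ∑ j ∈ Finset.range K,
    α j * (((W.1.map (u i)).sort (· ≤ ·)).reverse.getD j 0)

/-!
Write `y_j(W)` for the `(j+1)`-st largest utility of an agent on `W` (`0` past `|W|`) and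
`T_p(W) = y_0(W) + ⋯ + y_{p-1}(W)` for the sum of its `p` largest utilities. Adding an item of
utility `x ≥ 0` raises `T_{p+1}` by `max (x - y_p(W)) 0`, and `y_p(W)` only grows with `W`; so each
`T_p` is monotone and submodular. By Abel summation, the OWA score with nonincreasing nonnegative
weights is a nonnegative combination `∑_j (α_j - α_{j+1}) T_{j+1}` (with `α_K = 0`), hence
monotone and submodular too. For such functions the greedy gain at each step is at least `1/K` of
the remaining gap to an optimal `K`-set, which gives `OPT - u^α(W_K) ≤ (1 - 1/K)^K OPT`, and
`(1 - 1/K)^K ≤ 1/e`.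
-/

namespace List

variable {l : List ℝ}

theorem getD_le_of_forall_le {c : ℝ} (h : ∀ x ∈ l, x ≤ c) (hc : 0 ≤ c) (j : ℕ) :
    l.getD j 0 ≤ c := by
  induction l generalizing j with
  | nil => simpa using hc
  | cons a l ih =>
    cases j with
    | zero => exact h a mem_cons_self
    | succ j => exact ih (fun x hx => h x (mem_cons_of_mem a hx)) j

theorem getD_succ_le_of_pairwise_ge (hl : l.Pairwise (· ≥ ·)) (h0 : ∀ x ∈ l, 0 ≤ x) (j : ℕ) :
    l.getD (j + 1) 0 ≤ l.getD j 0 := by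
  induction l generalizing j with
  | nil => simp
  | cons a l ih =>
    rw [pairwise_cons] at hl
    cases j with
    | zero => exact getD_le_of_forall_le hl.1 (h0 a mem_cons_self) 0
    | succ j => exact ih hl.2 (fun x hx => h0 x (mem_cons_of_mem a hx)) j

theorem sum_range_succ_getD_cons (a : ℝ) (l : List ℝ) (p : ℕ) :
    ∑ j ∈ Finset.range (p + 1), (a :: l).getD j 0 = a + ∑ j ∈ Finset.range p, l.getD j 0 := by
  rw [Finset.sum_range_succ']
  simp [add_comm]

theorem sum_range_getD_orderedInsert {x : ℝ} (hx : 0 ≤ x) (hl : l.Pairwise (· ≥ ·)) (p : ℕ) :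
    ∑ j ∈ Finset.range (p + 1), (l.orderedInsert (· ≥ ·) x).getD j 0 =
      ∑ j ∈ Finset.range (p + 1), l.getD j 0 + max (x - l.getD p 0) 0 := by
  induction l generalizing p with
  | nil => simp [Finset.sum_range_succ', hx]
  | cons a l ih =>
    rw [pairwise_cons] at hl
    by_cases hax : a ≤ x
    · have hle : (a :: l).getD p 0 ≤ x :=
        getD_le_of_forall_le (forall_mem_cons.2 ⟨hax, fun y hy => (hl.1 y hy).trans hax⟩) hx p
      rw [orderedInsert_cons, if_pos hax, sum_range_succ_getD_cons, Finset.sum_range_succ,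
        max_eq_left (sub_nonneg.2 hle)]
      ring
    · rw [orderedInsert_cons, if_neg hax]
      cases p with
      | zero => simp [max_eq_right (sub_nonpos.2 (not_le.1 hax).le)]
      | succ q =>
        rw [sum_range_succ_getD_cons, ih hl.2, sum_range_succ_getD_cons, getD_cons_succ]
        ring

end List

namespace Multiset

noncomputable def nthLargest (j : ℕ) (s : Multiset ℝ) : ℝ := ((s.sort (· ≤ ·)).reverse).getD j 0

noncomputable def topSum (p : ℕ) (s : Multiset ℝ) : ℝ := ∑ j ∈ Finset.range p, s.nthLargest j

theorem pairwise_reverse_sort (s : Multiset ℝ) : (s.sort (· ≤ ·)).reverse.Pairwise (· ≥ ·) :=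
  List.pairwise_reverse.2 (s.pairwise_sort _)

theorem reverse_sort_cons (x : ℝ) (s : Multiset ℝ) :
    ((x ::ₘ s).sort (· ≤ ·)).reverse = (s.sort (· ≤ ·)).reverse.orderedInsert (· ≥ ·) x := by
  refine List.Perm.eq_of_pairwise' (pairwise_reverse_sort _)
    ((pairwise_reverse_sort s).orderedInsert x _) (coe_eq_coe.1 ?_)
  rw [coe_eq_coe.2 (List.perm_orderedInsert _ _ _), coe_reverse, ← cons_coe, coe_reverse,
    sort_eq, sort_eq]

theorem topSum_succ_cons {x : ℝ} (hx : 0 ≤ x) (s : Multiset ℝ) (p : ℕ) :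
    (x ::ₘ s).topSum (p + 1) = s.topSum (p + 1) + max (x - s.nthLargest p) 0 := by
  simp only [topSum, nthLargest, reverse_sort_cons]
  exact List.sum_range_getD_orderedInsert hx (pairwise_reverse_sort s) p

theorem nthLargest_eq_topSum_succ_sub (s : Multiset ℝ) (j : ℕ) :
    s.nthLargest j = s.topSum (j + 1) - s.topSum j := by
  rw [topSum, topSum, Finset.sum_range_succ, add_sub_cancel_left]

theorem nthLargest_succ_le {s : Multiset ℝ} (hs : ∀ y ∈ s, 0 ≤ y) (j : ℕ) :
    s.nthLargest (j + 1) ≤ s.nthLargest j :=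
  List.getD_succ_le_of_pairwise_ge (pairwise_reverse_sort s)
    (fun y hy => hs y (by simpa using hy)) j

theorem nthLargest_le_cons {x : ℝ} (hx : 0 ≤ x) {s : Multiset ℝ} (hs : ∀ y ∈ s, 0 ≤ y)
    (j : ℕ) : s.nthLargest j ≤ (x ::ₘ s).nthLargest j := by
  rw [nthLargest_eq_topSum_succ_sub, nthLargest_eq_topSum_succ_sub, topSum_succ_cons hx]
  cases j with
  | zero => simp [topSum]
  | succ q =>
    rw [topSum_succ_cons hx]
    have := max_le_max_right 0 (sub_le_sub_left (nthLargest_succ_le hs q) x)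
    linarith

theorem nthLargest_mono {s t : Multiset ℝ} (hst : s ≤ t) (ht : ∀ y ∈ t, 0 ≤ y) (j : ℕ) :
    s.nthLargest j ≤ t.nthLargest j := by
  obtain ⟨d, rfl⟩ := le_iff_exists_add.1 hst
  induction d using Multiset.induction_on with
  | empty => simp
  | cons x d ih =>
    rw [add_cons] at ht ⊢
    have hsd : ∀ y ∈ s + d, 0 ≤ y := fun y hy => ht y (mem_cons_of_mem hy)
    exact (ih (le_add_right s d) hsd).trans
      (nthLargest_le_cons (ht x (mem_cons_self x _)) hsd j)

end Multiset

section Submodular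

variable {A : Type*} [DecidableEq A]

def IsSubmodular (F : Finset A → ℝ) : Prop :=
  ∀ ⦃s t : Finset A⦄, s ⊆ t → ∀ ⦃a : A⦄, a ∉ t → F (insert a t) - F t ≤ F (insert a s) - F s

namespace IsSubmodular

variable {F : Finset A → ℝ}

theorem const_mul (hF : IsSubmodular F) {c : ℝ} (hc : 0 ≤ c) :
    IsSubmodular fun W => c * F W :=
  fun _ _ hst _ ha => by nlinarith [hF hst ha]

theorem sum {ι : Type*} {F : ι → Finset A → ℝ} (n : Finset ι)
    (hF : ∀ i ∈ n, IsSubmodular (F i)) : IsSubmodular fun W => ∑ i ∈ n, F i W := by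
  intro _ _ hst _ ha
  simp only [← Finset.sum_sub_distrib]
  exact Finset.sum_le_sum fun i hi => hF i hi hst ha

theorem le_add_sum_sub (hF : IsSubmodular F) (s : Finset A) {d : Finset A}
    (hd : Disjoint s d) : F (s ∪ d) ≤ F s + ∑ b ∈ d, (F (insert b s) - F s) := by
  induction d using Finset.induction_on with
  | empty => simp
  | insert b d hb ih =>
    rw [Finset.disjoint_insert_right] at hd
    have hbsd : b ∉ s ∪ d := by simp [hd.1, hb]
    rw [Finset.union_insert, Finset.sum_insert hb]
    linarith [ih hd.2, hF Finset.subset_union_left hbsd]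

theorem sub_le_of_greedy_step (hF : IsSubmodular F) (hmono : Monotone F) {W : Finset A} {a : A}
    (hmax : ∀ b ∉ W, F (insert b W) ≤ F (insert a W)) {S : Finset A} {K : ℕ}
    (hS : S.card ≤ K) : F S - F (insert a W) ≤ (1 - 1 / K) * (F S - F W) := by
  set Δ := F (insert a W) - F W
  have hΔ : 0 ≤ Δ := sub_nonneg.2 (hmono (Finset.subset_insert a W))
  have hgap : F S - F W ≤ K * Δ :=
    calc F S - F W ≤ F (W ∪ S \ W) - F W := by
          rw [Finset.union_sdiff_self_eq_union]
          exact sub_le_sub_right (hmono Finset.subset_union_right) _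
      _ ≤ ∑ b ∈ S \ W, (F (insert b W) - F W) :=
          sub_left_le_of_le_add (hF.le_add_sum_sub W Finset.disjoint_sdiff)
      _ ≤ (S \ W).card * Δ := by
          rw [← nsmul_eq_mul]
          exact Finset.sum_le_card_nsmul _ _ _ fun b hb =>
            sub_le_sub_right (hmax b (Finset.mem_sdiff.1 hb).2) _
      _ ≤ K * Δ := by
          gcongr
          exact_mod_cast (Finset.card_le_card Finset.sdiff_subset).trans hS
  have := div_le_of_le_mul₀ (Nat.cast_nonneg K) hΔ (mul_comm Δ K ▸ hgap)
  linarith [show (1 - 1 / (K : ℝ)) * (F S - F W) = F S - F W - (F S - F W) / K by ring]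

theorem sub_le_pow_mul_sub_of_greedy (hF : IsSubmodular F) (hmono : Monotone F) {K : ℕ}
    {W : ℕ → Finset A}
    (hstep : ∀ t < K, ∃ a, W (t + 1) = insert a (W t) ∧
      ∀ b ∉ W t, F (insert b (W t)) ≤ F (insert a (W t)))
    {S : Finset A} (hS : S.card ≤ K) :
    F S - F (W K) ≤ (1 - 1 / K) ^ K * (F S - F (W 0)) := by
  have hq : (0 : ℝ) ≤ 1 - 1 / K := Nat.one_sub_one_div_cast_nonneg K
  suffices ∀ t ≤ K, F S - F (W t) ≤ (1 - 1 / K) ^ t * (F S - F (W 0)) from this K le_rfl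
  intro t ht
  induction t with
  | zero => simp
  | succ t ih =>
    obtain ⟨a, hWa, hmax⟩ := hstep t ht
    calc F S - F (W (t + 1)) ≤ (1 - 1 / K) * (F S - F (W t)) :=
          hWa ▸ hF.sub_le_of_greedy_step hmono hmax hS
      _ ≤ (1 - 1 / K) * ((1 - 1 / K) ^ t * (F S - F (W 0))) :=
          mul_le_mul_of_nonneg_left (ih (Nat.le_of_succ_le ht)) hq
      _ = (1 - 1 / K) ^ (t + 1) * (F S - F (W 0)) := by ring

end IsSubmodular

end Submodular

section TopSum

variable {A : Type*} {f : A → ℝ}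

theorem monotone_topSum_map (hf : ∀ a, 0 ≤ f a) (p : ℕ) :
    Monotone fun W : Finset A => (W.1.map f).topSum p := fun _ _ hWV =>
  Finset.sum_le_sum fun j _ => Multiset.nthLargest_mono
    (Multiset.map_le_map (Finset.val_le_iff.2 hWV)) (by simp [hf]) j

variable [DecidableEq A]

theorem isSubmodular_topSum_map (hf : ∀ a, 0 ≤ f a) (p : ℕ) :
    IsSubmodular fun W : Finset A => (W.1.map f).topSum (p + 1) := by
  intro s t hst a ha
  simp only [Finset.insert_val_of_notMem ha, Finset.insert_val_of_notMem (fun h => ha (hst h)),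
    Multiset.map_cons, Multiset.topSum_succ_cons (hf a), add_sub_cancel_left]
  exact max_le_max_right 0 (sub_le_sub_left (Multiset.nthLargest_mono
    (Multiset.map_le_map (Finset.val_le_iff.2 hst)) (by simp [hf]) p) _)

end TopSum

theorem Finset.sum_range_mul_eq_add_sum_range_sub_mul (a y : ℕ → ℝ) (K : ℕ) :
    ∑ j ∈ range K, a j * y j =
      a K * ∑ j ∈ range K, y j + ∑ j ∈ range K, (a j - a (j + 1)) * ∑ i ∈ range (j + 1), y i := by
  induction K with
  | zero => simp
  | succ K ih =>
    rw [sum_range_succ (fun j => a j * y j), ih,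
      sum_range_succ (fun j => (a j - a (j + 1)) * ∑ i ∈ range (j + 1), y i), sum_range_succ y K]
    ring

section Owa

variable {I A : Type*} [DecidableEq A] (N : Finset I) (u : I → A → ℝ) (K : ℕ) (α : ℕ → ℝ)

theorem owaUtil_eq_sum_topSum (W : Finset A) :
    owaUtil N u K α W = ∑ i ∈ N, ∑ j ∈ range K,
      ((Set.Iio K).indicator α j - (Set.Iio K).indicator α (j + 1)) *
        (W.1.map (u i)).topSum (j + 1) := by
  rw [owaUtil]
  refine sum_congr rfl fun i _ => ?_
  have h := sum_range_mul_eq_add_sum_range_sub_mul ((Set.Iio K).indicator α)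
    (fun j => (W.1.map (u i)).nthLargest j) K
  rw [Set.indicator_of_notMem Set.self_notMem_Iio, zero_mul, zero_add] at h
  refine (sum_congr rfl fun j hj => ?_).trans h
  rw [Set.indicator_of_mem (Set.mem_Iio.2 (mem_range.1 hj))]
  rfl

theorem owaUtil_empty : owaUtil N u K α (∅ : Finset A) = 0 := by
  simp [owaUtil]

variable {u K α} (hu : ∀ i a, 0 ≤ u i a) (hα_nonneg : ∀ j, j < K → 0 ≤ α j)
  (hα_mono : ∀ j k, j ≤ k → k < K → α k ≤ α j)
include hα_nonneg hα_mono

theorem indicator_Iio_sub_succ_nonneg (j : ℕ) :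
    0 ≤ (Set.Iio K).indicator α j - (Set.Iio K).indicator α (j + 1) := by
  by_cases hj : j + 1 < K
  · rw [Set.indicator_of_mem (Set.mem_Iio.2 hj),
      Set.indicator_of_mem (Set.mem_Iio.2 (Nat.lt_of_succ_lt hj))]
    exact sub_nonneg.2 (hα_mono j (j + 1) j.le_succ hj)
  · rw [Set.indicator_of_notMem (mt Set.mem_Iio.1 hj), sub_zero]
    by_cases hj' : j < K
    · rw [Set.indicator_of_mem (Set.mem_Iio.2 hj')]
      exact hα_nonneg j hj'
    · rw [Set.indicator_of_notMem (mt Set.mem_Iio.1 hj')]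

include hu

theorem monotone_owaUtil : Monotone (owaUtil N u K α : Finset A → ℝ) := by
  intro W V hWV
  simp only [owaUtil_eq_sum_topSum]
  exact sum_le_sum fun i _ => sum_le_sum fun j _ => mul_le_mul_of_nonneg_left
    (monotone_topSum_map (hu i) (j + 1) hWV) (indicator_Iio_sub_succ_nonneg hα_nonneg hα_mono j)

theorem isSubmodular_owaUtil : IsSubmodular (owaUtil N u K α : Finset A → ℝ) := by
  simp only [funext (owaUtil_eq_sum_topSum N u K α)]
  exact IsSubmodular.sum N fun i _ => IsSubmodular.sum _ fun j _ =>
    (isSubmodular_topSum_map (hu i) j).const_mul (indicator_Iio_sub_succ_nonneg hα_nonneg hα_mono j)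

end Owa

theorem stmt_2_general {I A : Type*} [DecidableEq A] [Fintype A]
    (N : Finset I) (u : I → A → ℝ) (hu : ∀ i a, 0 ≤ u i a)
    (K : ℕ) (hK : 1 ≤ K)
    (α : ℕ → ℝ)
    (hα_nonneg : ∀ j, j < K → 0 ≤ α j)
    (hα_mono : ∀ j k, j ≤ k → k < K → α k ≤ α j)
    (W : ℕ → Finset A) (hW0 : W 0 = ∅)
    (hstep : ∀ t, t < K → ∃ a, a ∉ W t ∧ W (t + 1) = insert a (W t) ∧
      ∀ b, b ∉ W t →
        owaUtil N u K α (insert b (W t)) ≤ owaUtil N u K α (insert a (W t)))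
    (hne : ((Finset.univ : Finset A).powersetCard K).Nonempty) :
    (1 - 1 / Real.exp 1) *
        ((Finset.univ : Finset A).powersetCard K).sup' hne (owaUtil N u K α) ≤
      (1 - (1 - 1 / (K : ℝ)) ^ K) *
        ((Finset.univ : Finset A).powersetCard K).sup' hne (owaUtil N u K α) ∧
    (1 - (1 - 1 / (K : ℝ)) ^ K) *
        ((Finset.univ : Finset A).powersetCard K).sup' hne (owaUtil N u K α) ≤
      owaUtil N u K α (W K) := by
  have hmono := monotone_owaUtil N hu hα_nonneg hα_mono
  obtain ⟨S, hS, hSmax⟩ := exists_mem_eq_sup' hne (owaUtil N u K α)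
  rw [hSmax]
  have hS_nonneg : 0 ≤ owaUtil N u K α S := owaUtil_empty N u K α ▸ hmono (empty_subset S)
  have hgreedy := (isSubmodular_owaUtil N hu hα_nonneg hα_mono).sub_le_pow_mul_sub_of_greedy hmono
    (fun t ht => (hstep t ht).imp fun _ ha => ha.2) (mem_powersetCard.1 hS).2.le
  rw [hW0, owaUtil_empty, sub_zero] at hgreedy
  have hexp : (1 - 1 / (K : ℝ)) ^ K ≤ 1 / Real.exp 1 := by
    simpa [Real.exp_neg] using
      Real.one_sub_div_pow_le_exp_neg (n := K) (t := 1) (by exact_mod_cast hK)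
  exact ⟨mul_le_mul_of_nonneg_right (by linarith) hS_nonneg, by linarith⟩

/-- Correctness of the greedy algorithm for a nonincreasing nonnegative OWA `α`:
if `W 0 = ∅` and each `W (t+1)` extends `W t` by an item maximizing the marginal
gain of `u^α`, then `u^α(W K) ≥ (1 − (1 − 1/K)^K)·OPT ≥ (1 − 1/e)·OPT`, where
`OPT` is the maximum of `u^α` over size-`K` subsets of `A`. -/
theorem stmt_2 {I A : Type*} [DecidableEq A] [Fintype A]
    (N : Finset I) (u : I → A → ℝ) (hu : ∀ i a, 0 ≤ u i a)
    (K : ℕ) (hK : 1 ≤ K) (hKm : K ≤ Fintype.card A)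
    (α : ℕ → ℝ)
    (hα_nonneg : ∀ j, j < K → 0 ≤ α j)
    (hα_mono : ∀ j k, j ≤ k → k < K → α k ≤ α j)
    (W : ℕ → Finset A) (hW0 : W 0 = ∅)
    (hstep : ∀ t, t < K → ∃ a, a ∉ W t ∧ W (t + 1) = insert a (W t) ∧
      ∀ b, b ∉ W t →
        owaUtil N u K α (insert b (W t)) ≤ owaUtil N u K α (insert a (W t)))
    (hne : ((Finset.univ : Finset A).powersetCard K).Nonempty) :
    (1 - 1 / Real.exp 1) *
        ((Finset.univ : Finset A).powersetCard K).sup' hne (owaUtil N u K α) ≤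
      (1 - (1 - 1 / (K : ℝ)) ^ K) *
        ((Finset.univ : Finset A).powersetCard K).sup' hne (owaUtil N u K α) ∧
    (1 - (1 - 1 / (K : ℝ)) ^ K) *
        ((Finset.univ : Finset A).powersetCard K).sup' hne (owaUtil N u K α) ≤
      owaUtil N u K α (W K) :=
  stmt_2_general N u hu K hK α hα_nonneg hα_mono W hW0 hstep hne
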